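/- Let kp, γp, γr > 0, μ* > 0, ū > 0, and let φ(u) = min{max{0, u}, ū}. Suppose the PI gains satisfy k2 > 0 and k1 > k2/(γp + γr), and let δu ∈ ℝ be a constant input disturbance satisfying (γp·γr/kp)·μ* − ū ≤ δu ≤ (γp·γr/kp)·μ*. Then every continuously differentiable solution (x1, x2, I) : [0, ∞) → ℝ³ of the disturbed closed-loop system ẋ1 = −γr·x1 + φ(k1(μ* − x2) + k2·I) + δu, ẋ2 = kp·x1 − γp·x2, İ = μ* − x2 satisfies x2(t) → μ* as t → ∞, i.e., the constant disturbance is rejected. -/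

import Mathlib

/-!
Shift to the equilibrium `x₁ = γp μ / kp`, `x₂ = μ`, at which the control equals
`u⋆ = γp γr μ / kp - δu ∈ [0, ū]`. In the shifted variables the saturation becomes
`ψ σ = φ (σ + u⋆) - u⋆`, a continuous nonlinearity with `σ ψ σ ≥ 0`, and the closed loop is a
Lur'e system. The Lyapunov function `V = Q(z₁, z₂) + ∫₀^w ψ`, with `Q` a positive definite
quadratic form, satisfies `V̇ = -((k₁ (γp + γr) - k₂) ż₂² + γp γr k₂ z₂²) / kp ≤ -c z₂²`.
So the state stays bounded, `ż₂` is bounded, and Barbalat's argument gives `z₂ → 0`.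
-/

open Filter Set Topology

lemma sub_le_mul_sub_of_hasDerivAt_le {f f' : ℝ → ℝ} {C s t : ℝ} (hst : s ≤ t)
    (hf : ∀ u ∈ Icc s t, HasDerivAt f (f' u) u) (hf' : ∀ u ∈ Ioo s t, f' u ≤ C) :
    f t - f s ≤ C * (t - s) := by
  have hf_Ioo : ∀ u ∈ Ioo s t, HasDerivAt f (f' u) u := fun u hu => hf u (Ioo_subset_Icc_self hu)
  refine (convex_Icc s t).image_sub_le_mul_sub_of_deriv_le
    (fun u hu => (hf u hu).continuousAt.continuousWithinAt) ?_ ?_ s (left_mem_Icc.2 hst) t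
    (right_mem_Icc.2 hst) hst <;> rw [interior_Icc]
  · exact fun u hu => (hf_Ioo u hu).differentiableAt.differentiableWithinAt
  · exact fun u hu => (hf_Ioo u hu).deriv ▸ hf' u hu

lemma antitoneOn_Ici_of_hasDerivAt_nonpos {f f' : ℝ → ℝ} {a : ℝ}
    (hf : ∀ t, a ≤ t → HasDerivAt f (f' t) t) (hf' : ∀ t, a ≤ t → f' t ≤ 0) :
    AntitoneOn f (Ici a) := by
  intro s hs t _ hst
  have := sub_le_mul_sub_of_hasDerivAt_le hst (fun u hu => hf u (le_trans hs hu.1))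
    (fun u hu => hf' u (hs.trans hu.1.le))
  linarith

lemma nonneg_of_hasDerivAt_of_mul_nonneg {Ψ ψ : ℝ → ℝ} (hΨ : ∀ σ, HasDerivAt Ψ (ψ σ) σ)
    (hΨ0 : Ψ 0 = 0) (hψ : ∀ σ, 0 ≤ σ * ψ σ) (σ : ℝ) : 0 ≤ Ψ σ := by
  rcases le_total 0 σ with hσ | hσ
  · have := sub_le_mul_sub_of_hasDerivAt_le (f := fun x => -Ψ x) hσ (fun u _ => (hΨ u).neg)
      (fun u hu => neg_nonpos.2 (nonneg_of_mul_nonneg_right (hψ u) hu.1))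
    linarith
  · have := sub_le_mul_sub_of_hasDerivAt_le hσ (fun u _ => hΨ u)
      (fun u hu => nonpos_of_mul_nonneg_right (hψ u) hu.2)
    linarith

lemma exists_tendsto_atTop_of_antitoneOn_Ici {f : ℝ → ℝ} {a : ℝ} (hf : AntitoneOn f (Ici a))
    (hbdd : BddBelow (f '' Ici a)) : ∃ l, Tendsto f atTop (𝓝 l) := by
  have hanti : Antitone fun t => f (max t a) := fun s t hst =>
    hf (le_max_right s a) (le_max_right t a) (max_le_max hst le_rfl)
  have hbdd' : BddBelow (range fun t => f (max t a)) :=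
    hbdd.mono (range_subset_iff.2 fun t => mem_image_of_mem f (le_max_right t a))
  refine ⟨_, (tendsto_atTop_ciInf hanti hbdd').congr' ?_⟩
  filter_upwards [eventually_ge_atTop a] with t ht
  rw [max_eq_left ht]

/-- Barbalat's lemma in Lyapunov form. -/
theorem tendsto_zero_of_hasDerivAt_le_neg_mul_sq {V V' g g' : ℝ → ℝ} {c L : ℝ} (hc : 0 < c)
    (hV : ∀ t, 0 ≤ t → HasDerivAt V (V' t) t) (hV' : ∀ t, 0 ≤ t → V' t ≤ -c * g t ^ 2)
    (hV0 : ∀ t, 0 ≤ t → 0 ≤ V t)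
    (hg : ∀ t, 0 ≤ t → HasDerivAt g (g' t) t) (hg' : ∀ t, 0 ≤ t → |g' t| ≤ L) :
    Tendsto g atTop (𝓝 0) := by
  have hVanti : AntitoneOn V (Ici 0) := antitoneOn_Ici_of_hasDerivAt_nonpos hV
    fun t ht => (hV' t ht).trans (by nlinarith [sq_nonneg (g t)])
  obtain ⟨l, hl⟩ := exists_tendsto_atTop_of_antitoneOn_Ici hVanti
    ⟨0, by rintro _ ⟨t, ht, rfl⟩; exact hV0 t ht⟩
  have hLip : ∀ s t, 0 ≤ s → s ≤ t → |g t - g s| ≤ L * (t - s) := fun s t hs hst => by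
    simpa [abs_of_nonneg (sub_nonneg.2 hst)] using
      (convex_Ici 0).norm_image_sub_le_of_norm_hasDerivWithin_le
        (fun u hu => (hg u hu).hasDerivWithinAt) (fun u hu => hg' u hu)
        (show s ∈ Ici 0 from hs) (show t ∈ Ici 0 from hs.trans hst)
  have hL : 0 ≤ L := (abs_nonneg _).trans (hg' 0 le_rfl)
  rw [Metric.tendsto_atTop]
  intro ε hε
  set δ := ε / (2 * (L + 1))
  have hδ : 0 < δ := by positivity
  have hLδ : L * δ ≤ ε / 2 := by
    have : (L + 1) * δ = ε / 2 := by simp only [δ]; field_simp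
    nlinarith
  have hdrop : Tendsto (fun t => V t - V (t + δ)) atTop (𝓝 0) := by
    simpa using hl.sub (hl.comp (tendsto_atTop_add_const_right _ δ tendsto_id))
  obtain ⟨T, hT⟩ := ((hdrop.eventually_lt_const (by positivity : 0 < c * (ε / 2) ^ 2 * δ)).and
    (eventually_ge_atTop 0)).exists_forall_of_atTop
  refine ⟨T, fun t ht => ?_⟩
  obtain ⟨hsmall, ht0⟩ := hT t ht
  rw [Real.dist_eq, sub_zero]
  by_contra! hgt
  have hbig : ∀ u ∈ Icc t (t + δ), (ε / 2) ^ 2 ≤ g u ^ 2 := by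
    intro u hu
    have := hLip t u ht0 hu.1
    have : L * (u - t) ≤ L * δ := mul_le_mul_of_nonneg_left (by linarith [hu.2]) hL
    have : ε / 2 ≤ |g u| := by
      linarith [abs_sub_abs_le_abs_sub (g t) (g u), abs_sub_comm (g t) (g u)]
    simpa [sq_abs] using pow_le_pow_left₀ (by positivity) this 2
  have := sub_le_mul_sub_of_hasDerivAt_le (C := -(c * (ε / 2) ^ 2)) (s := t) (t := t + δ)
    (by linarith)
    (fun u hu => hV u (ht0.trans hu.1))
    (fun u hu => (hV' u (ht0.trans hu.1.le)).trans
      (by nlinarith [hbig u (Ioo_subset_Icc_self hu)]))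
  nlinarith

lemma quadForm_nonneg {a b d x y : ℝ} (ha : 0 < a) (hD : d ^ 2 < 4 * a * b) :
    0 ≤ a * x ^ 2 + b * y ^ 2 + d * x * y := by
  nlinarith [sq_nonneg (2 * a * x + d * y), sq_nonneg y]

lemma abs_le_sqrt_of_quadForm_le {a b d x y K : ℝ} (hb : 0 < b) (hD : d ^ 2 < 4 * a * b)
    (hQ : a * x ^ 2 + b * y ^ 2 + d * x * y ≤ K) :
    |x| ≤ √(4 * b * K / (4 * a * b - d ^ 2)) := by
  apply Real.abs_le_sqrt
  rw [le_div_iff₀ (by linarith)]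
  nlinarith [sq_nonneg (2 * b * y + d * x)]

lemma mul_min_max_sub_nonneg {u uBar : ℝ} (h0 : 0 ≤ u) (h1 : u ≤ uBar) (σ : ℝ) :
    0 ≤ σ * (min (max 0 (σ + u)) uBar - u) := by
  rcases le_total 0 σ with hσ | hσ
  · exact mul_nonneg hσ (sub_nonneg.2 (le_min (le_max_of_le_right (by linarith)) h1))
  · exact mul_nonneg_of_nonpos_of_nonpos hσ
      (sub_nonpos.2 (min_le_of_left_le (max_le h0 (by linarith))))

section SectorFeedback

variable {kp γp γr k1 k2 : ℝ} {ψ Ψ z1 z2 w : ℝ → ℝ}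

/-- In `V = Q(z₁, z₂) + Ψ(w)` with `Ψ' = ψ`, the coefficients of `x ^ 2` and `x * y` are forced
by the cancellation of the `ψ`-terms in `V̇`; the coefficient of `y ^ 2` turns `V̇` into a
negative sum of squares. -/
noncomputable def lyapunovQuad (kp γp γr k1 k2 x y : ℝ) : ℝ :=
  k1 * kp / 2 * x ^ 2 + (γp * (k1 * (γp + γr) - k2) + γr * k2) / (2 * kp) * y ^ 2
    + (k2 - k1 * γp) * x * y

lemma hasDerivAt_lyapunov {t : ℝ} (hkp : kp ≠ 0)
    (hz1 : HasDerivAt z1 (-γr * z1 t + ψ (w t)) t)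
    (hz2 : HasDerivAt z2 (kp * z1 t - γp * z2 t) t)
    (hw : HasDerivAt w (-(k1 * kp) * z1 t + (k1 * γp - k2) * z2 t) t)
    (hΨ : HasDerivAt Ψ (ψ (w t)) (w t)) :
    HasDerivAt (fun s => lyapunovQuad kp γp γr k1 k2 (z1 s) (z2 s) + Ψ (w s))
      (-((k1 * (γp + γr) - k2) * (kp * z1 t - γp * z2 t) ^ 2 + γp * γr * k2 * z2 t ^ 2) / kp)
      t := by
  refine ((((hz1.fun_pow 2).const_mul (k1 * kp / 2)).fun_add ((hz2.fun_pow 2).const_mul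
    ((γp * (k1 * (γp + γr) - k2) + γr * k2) / (2 * kp)))).fun_add
    ((hz1.const_mul (k2 - k1 * γp)).fun_mul hz2)).fun_add (hΨ.comp t hw) |>.congr_deriv ?_
  field_simp
  ring

theorem tendsto_zero_of_sector_feedback (hkp : 0 < kp) (hγp : 0 < γp) (hγr : 0 < γr)
    (hk2 : 0 < k2) (hk1 : k2 < k1 * (γp + γr)) (hψ : Continuous ψ)
    (hψ_sector : ∀ σ, 0 ≤ σ * ψ σ)
    (hz1 : ∀ t, 0 ≤ t → HasDerivAt z1 (-γr * z1 t + ψ (w t)) t)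
    (hz2 : ∀ t, 0 ≤ t → HasDerivAt z2 (kp * z1 t - γp * z2 t) t)
    (hw : ∀ t, 0 ≤ t → HasDerivAt w (-(k1 * kp) * z1 t + (k1 * γp - k2) * z2 t) t) :
    Tendsto z2 atTop (𝓝 0) := by
  set Ψ : ℝ → ℝ := fun σ => ∫ s in (0)..σ, ψ s
  have hΨ : ∀ σ, HasDerivAt Ψ (ψ σ) σ := fun σ => (hψ.integral_hasStrictDerivAt 0 σ).hasDerivAt
  have hΨ0 : ∀ σ, 0 ≤ Ψ σ := nonneg_of_hasDerivAt_of_mul_nonneg hΨ (by simp [Ψ]) hψ_sector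
  set e := k1 * (γp + γr) - k2
  have he : 0 < e := by linarith
  have hk1pos : 0 < k1 := by nlinarith
  set a := k1 * kp / 2
  set b := (γp * e + γr * k2) / (2 * kp)
  have ha : 0 < a := by positivity
  have hb : 0 < b := by positivity
  have hD : (k2 - k1 * γp) ^ 2 < 4 * a * b := by
    have : 4 * a * b - (k2 - k1 * γp) ^ 2 = k1 ^ 2 * γp * γr + k2 * e := by
      simp only [a, b, e]; field_simp; ring
    nlinarith [mul_pos (mul_pos (pow_pos hk1pos 2) hγp) hγr, mul_pos hk2 he]
  set V := fun t => lyapunovQuad kp γp γr k1 k2 (z1 t) (z2 t) + Ψ (w t)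
  have hV : ∀ t, 0 ≤ t → HasDerivAt V
      (-(e * (kp * z1 t - γp * z2 t) ^ 2 + γp * γr * k2 * z2 t ^ 2) / kp) t :=
    fun t ht => hasDerivAt_lyapunov hkp.ne' (hz1 t ht) (hz2 t ht) (hw t ht) (hΨ _)
  have hc : 0 < γp * γr * k2 / kp := by positivity
  have hV' : ∀ t, -(e * (kp * z1 t - γp * z2 t) ^ 2 + γp * γr * k2 * z2 t ^ 2) / kp
      ≤ -(γp * γr * k2 / kp) * z2 t ^ 2 := fun t => by
    rw [neg_div, neg_mul, neg_le_neg_iff, div_mul_eq_mul_div]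
    gcongr
    nlinarith [sq_nonneg (kp * z1 t - γp * z2 t)]
  have hV0 : ∀ t, 0 ≤ V t := fun t => add_nonneg (quadForm_nonneg ha hD) (hΨ0 _)
  have hQ : ∀ t, 0 ≤ t → lyapunovQuad kp γp γr k1 k2 (z1 t) (z2 t) ≤ V 0 := fun t ht =>
    (le_add_of_nonneg_right (hΨ0 _)).trans <| antitoneOn_Ici_of_hasDerivAt_nonpos hV
      (fun t _ => (hV' t).trans (by nlinarith [sq_nonneg (z2 t)])) self_mem_Ici ht ht
  refine tendsto_zero_of_hasDerivAt_le_neg_mul_sq (c := γp * γr * k2 / kp)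
    (L := kp * √(4 * b * V 0 / (4 * a * b - (k2 - k1 * γp) ^ 2))
      + γp * √(4 * a * V 0 / (4 * a * b - (k2 - k1 * γp) ^ 2)))
    hc hV (fun t _ => hV' t) (fun t _ => hV0 t) hz2 fun t ht => ?_
  have hz1_le := abs_le_sqrt_of_quadForm_le hb hD (hQ t ht)
  have hz2_le := abs_le_sqrt_of_quadForm_le (a := b) (b := a) (d := k2 - k1 * γp) (x := z2 t)
    (y := z1 t) ha (by linarith)
    (by convert hQ t ht using 1; simp only [lyapunovQuad, a, b, e]; ring)
  rw [mul_right_comm 4 b a] at hz2_le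
  calc |kp * z1 t - γp * z2 t| ≤ kp * |z1 t| + γp * |z2 t| := by
        simpa [abs_mul, abs_of_pos hkp, abs_of_pos hγp] using abs_sub (kp * z1 t) (γp * z2 t)
    _ ≤ _ := by gcongr

end SectorFeedback

theorem stmt7 (kp γp γr μ k1 k2 uBar δu : ℝ)
    (hkp : 0 < kp) (hγp : 0 < γp) (hγr : 0 < γr)
    (hk2 : 0 < k2) (hk1 : k1 > k2 / (γp + γr))
    (hδl : (γp * γr / kp) * μ - uBar ≤ δu) (hδu : δu ≤ (γp * γr / kp) * μ)
    (x1 x2 I : ℝ → ℝ)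
    (hx1 : ∀ t : ℝ, 0 ≤ t →
      HasDerivAt x1
        (-γr * x1 t + min (max 0 (k1 * (μ - x2 t) + k2 * I t)) uBar + δu) t)
    (hx2 : ∀ t : ℝ, 0 ≤ t → HasDerivAt x2 (kp * x1 t - γp * x2 t) t)
    (hI : ∀ t : ℝ, 0 ≤ t → HasDerivAt I (μ - x2 t) t) :
    Filter.Tendsto x2 Filter.atTop (nhds μ) := by
  set u := γp * γr / kp * μ - δu
  have hz2 := tendsto_zero_of_sector_feedback (z1 := fun t => x1 t - γp * μ / kp)
    (z2 := fun t => x2 t - μ) (w := fun t => k1 * (μ - x2 t) + k2 * I t - u)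
    (ψ := fun σ => min (max 0 (σ + u)) uBar - u) hkp hγp hγr hk2
    ((div_lt_iff₀ (by positivity)).1 hk1) (by fun_prop)
    (mul_min_max_sub_nonneg (by linarith) (by linarith))
    (fun t ht => ((hx1 t ht).sub_const _).congr_deriv (by simp only [u, sub_add_cancel]; ring))
    (fun t ht => ((hx2 t ht).sub_const _).congr_deriv (by field_simp; ring))
    (fun t ht => ((((hx2 t ht).const_sub μ).const_mul k1).add ((hI t ht).const_mul k2)
      |>.sub_const u).congr_deriv (by field_simp; ring))
  simpa using hz2.add_const μ
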